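/- arXiv:1601.03131 — 4 statements merged into one kernel-verified Lean document; each statement's English description precedes it below -/
import Mathlib

section
/- Let N ≥ 1 be an integer and m : ZMod N → ℤ a function with m(j) ∈ {−1, 0, 1} for every j and with total sum Σ_{j ∈ ZMod N} m(j) < 0. Then the cardinality of the set {j ∈ ZMod N : m(j) = −1 and Σ_{k=1}^{r} m(j − k) ≤ 0 for every integer r ≥ 1} equals −Σ_{j ∈ ZMod N} m(j). -/
/-!
Lift `m` to the walk `W n = m 0 + ⋯ + m (n - 1)` on `ℕ`. It satisfies `W (n + N) = W n + ∑ m`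
and never drops by more than one per step. Writing `n = j.val + N`, the backward sums at `j` are
`W n - W (n - r)`, so `j` is counted exactly when `W (n + 1)` is a strict record minimum of `W`;
periodicity and `∑ m < 0` reduce the condition on all `r` to `r < N`. Because `W` descends one
unit at a time, each strict record lowers the running minimum by exactly one, so the records in
`(N, 2N]` number `min_{q ≤ N} W q - min_{q ≤ 2N} W q = -∑ m`.
-/

open Finset

namespace StrictRecord

def runMin (f : ℕ → ℤ) (n : ℕ) : ℤ := (Iic n).inf' nonempty_Iic f

def IsStrictRecord (f : ℕ → ℤ) (p : ℕ) : Prop := ∀ q < p, f p < f q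

instance (f : ℕ → ℤ) : DecidablePred (IsStrictRecord f) :=
  fun p => inferInstanceAs (Decidable (∀ q < p, f p < f q))

variable {f : ℕ → ℤ} {a b n q : ℕ}

theorem le_runMin_iff {c : ℤ} : c ≤ runMin f n ↔ ∀ q ≤ n, c ≤ f q := by
  simp [runMin, le_inf'_iff]

theorem runMin_le (h : q ≤ n) : runMin f n ≤ f q :=
  inf'_le f (mem_Iic.2 h)

theorem exists_le_runMin_eq (f : ℕ → ℤ) (n : ℕ) : ∃ q ≤ n, f q = runMin f n := by
  obtain ⟨q, hq, h⟩ := exists_mem_eq_inf' (nonempty_Iic (a := n)) f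
  exact ⟨q, mem_Iic.1 hq, h.symm⟩

theorem runMin_succ : runMin f (n + 1) = min (runMin f n) (f (n + 1)) := by
  refine eq_of_forall_le_iff fun c => ?_
  simp only [le_min_iff, le_runMin_iff]
  refine ⟨fun h => ⟨fun q hq => h q (by omega), h _ le_rfl⟩, fun ⟨h, h'⟩ q hq => ?_⟩
  rcases Nat.of_le_succ hq with hq | rfl
  exacts [h q hq, h']

theorem isStrictRecord_succ_iff : IsStrictRecord f (n + 1) ↔ f (n + 1) < runMin f n := by
  simp [IsStrictRecord, runMin, lt_inf'_iff]

theorem card_filter_isStrictRecord_Ioc (hf : ∀ n, f n - 1 ≤ f (n + 1)) (hab : a ≤ b) :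
    (#{p ∈ Ioc a b | IsStrictRecord f p} : ℤ) = runMin f a - runMin f b := by
  induction b, hab using Nat.le_induction with
  | base => simp
  | succ b hab ih =>
    rw [← insert_Ioc_right_eq_Ioc_add_one hab, filter_insert, runMin_succ]
    by_cases h : IsStrictRecord f (b + 1)
    · have hlt := isStrictRecord_succ_iff.1 h
      have hmin : runMin f b ≤ f b := runMin_le le_rfl
      have hdrop := hf b
      rw [if_pos h, card_insert_of_notMem (by simp)]
      push_cast
      omega
    · have hle := not_lt.1 (mt isStrictRecord_succ_iff.2 h)
      rw [if_neg h, min_eq_left hle, ih]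

theorem runMin_add_of_periodic {d : ℕ} {c : ℤ} (hf : ∀ n, f (n + d) = f n + c) (hc : c ≤ 0)
    (ha : d ≤ a + 1) : runMin f (a + d) = runMin f a + c := by
  refine le_antisymm ?_ (le_runMin_iff.2 fun q hq => ?_)
  · obtain ⟨q, hq, hfq⟩ := exists_le_runMin_eq f a
    rw [← hfq, ← hf]
    exact runMin_le (by omega)
  · rcases lt_or_ge q d with hqd | hqd
    · linarith [runMin_le (f := f) (show q ≤ a by omega)]
    · obtain ⟨q, rfl⟩ := Nat.exists_eq_add_of_le' hqd
      rw [hf]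
      linarith [runMin_le (f := f) (show q ≤ a by omega)]

theorem isStrictRecord_iff_of_periodic {d p : ℕ} {c : ℤ} (hf : ∀ n, f (n + d) = f n + c)
    (hd : 0 < d) (hc : c ≤ 0) : IsStrictRecord f p ↔ ∀ q < p, p ≤ q + d → f p < f q := by
  refine ⟨fun h q hq _ => h q hq, fun h q hq => ?_⟩
  induction hk : p - q using Nat.strong_induction_on generalizing q with
  | _ k ih =>
    by_cases hpq : p ≤ q + d
    · exact h q hq hpq
    · have := ih (p - (q + d)) (by omega) (q + d) (by omega) rfl
      linarith [hf q]

end StrictRecord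

namespace ZMod

variable {N : ℕ} [NeZero N]

theorem sum_range_natCast {M : Type*} [AddCommMonoid M] (f : ZMod N → M) :
    ∑ k ∈ range N, f k = ∑ j, f j := by
  refine sum_nbij' (fun k => (k : ZMod N)) ZMod.val (by simp) (by simp [ZMod.val_lt])
    (fun k hk => ZMod.val_cast_of_lt (mem_range.1 hk)) (fun j _ => ZMod.natCast_zmod_val j)
    (fun _ _ => rfl)

theorem ncard_setOf_val_add (P : ℕ → Prop) [DecidablePred P] (a : ℕ) :
    {j : ZMod N | P (j.val + a)}.ncard = #{p ∈ Ico a (a + N) | P p} := by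
  rw [← Set.ncard_coe_finset]
  refine Set.ncard_congr (fun j _ => j.val + a) ?_ ?_ ?_
  · intro j hj
    simp only [coe_filter, mem_Ico]
    exact ⟨⟨by omega, by have := ZMod.val_lt j; omega⟩, hj⟩
  · intro i j _ _ h
    exact ZMod.val_injective N (by omega)
  · intro p hp
    obtain ⟨hp, hP⟩ := mem_filter.1 (mem_coe.1 hp)
    have hp := mem_Ico.1 hp
    have hval : ((p - a : ℕ) : ZMod N).val + a = p := by
      rw [ZMod.val_cast_of_lt (by omega), Nat.sub_add_cancel hp.1]
    exact ⟨_, show P _ by rwa [hval], hval⟩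

end ZMod

namespace CyclicWalk

open StrictRecord

variable {N : ℕ} (m : ZMod N → ℤ)

def walk (n : ℕ) : ℤ := ∑ k ∈ range n, m k

theorem walk_succ (n : ℕ) : walk m (n + 1) = walk m n + m n :=
  sum_range_succ _ n

theorem walk_sub_one_le (hm : ∀ j, -1 ≤ m j) (n : ℕ) : walk m n - 1 ≤ walk m (n + 1) := by
  linarith [walk_succ m n, hm n]

theorem walk_add_period [NeZero N] (n : ℕ) : walk m (n + N) = walk m n + ∑ j, m j := by
  rw [walk, walk, sum_range_add, ← Equiv.sum_comp (Equiv.addLeft (n : ZMod N)),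
    ← ZMod.sum_range_natCast]
  push_cast
  rfl

theorem sum_Icc_sub_eq_walk_sub {r n : ℕ} (h : r ≤ n) :
    ∑ k ∈ Icc 1 r, m ((n : ZMod N) - k) = walk m n - walk m (n - r) := by
  induction r with
  | zero => simp
  | succ r ih =>
    rw [sum_Icc_succ_top (by omega), ih (by omega)]
    have : n - r = n - (r + 1) + 1 := by omega
    rw [this, walk_succ, Nat.cast_sub (by omega : r + 1 ≤ n)]
    ring

theorem sum_Icc_add_period [NeZero N] (j : ZMod N) (r : ℕ) :
    ∑ k ∈ Icc 1 (r + N), m (j - k) = ∑ k ∈ Icc 1 r, m (j - k) + ∑ i, m i := by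
  set n := j.val + (r + N) * N
  have hn : (n : ZMod N) = j := by simp [n]
  have hrn : r + N ≤ n := (Nat.le_mul_of_pos_right _ (NeZero.pos N)).trans (Nat.le_add_left _ _)
  have hperiod : n - r = n - (r + N) + N := by omega
  rw [← hn, sum_Icc_sub_eq_walk_sub m hrn, sum_Icc_sub_eq_walk_sub m (by omega), hperiod,
    walk_add_period]
  ring

theorem sum_Icc_sub_nonpos [NeZero N] (hsum : ∑ i, m i < 0) {j : ZMod N}
    (h : ∀ r < N, ∑ k ∈ Icc 1 r, m (j - k) ≤ 0) (r : ℕ) : ∑ k ∈ Icc 1 r, m (j - k) ≤ 0 := by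
  induction r using Nat.strong_induction_on with
  | _ r ih =>
    rcases lt_or_ge r N with hr | hr
    · exact h r hr
    · obtain ⟨r, rfl⟩ := Nat.exists_eq_add_of_le' hr
      linarith [sum_Icc_add_period m j r, ih r (Nat.lt_add_of_pos_right (NeZero.pos N))]

theorem good_iff_isStrictRecord [NeZero N] (hm : ∀ j, m j = -1 ∨ m j = 0 ∨ m j = 1)
    (hsum : ∑ i, m i < 0) (j : ZMod N) :
    (m j = -1 ∧ ∀ r : ℕ, 1 ≤ r → ∑ k ∈ Icc 1 r, m (j - k) ≤ 0) ↔
      IsStrictRecord (walk m) (j.val + (N + 1)) := by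
  rw [← add_assoc, isStrictRecord_iff_of_periodic (walk_add_period m) (NeZero.pos N) hsum.le]
  have hj := ZMod.val_lt j
  set n := j.val + N
  have hn : (n : ZMod N) = j := by simp [n]
  have hS : ∀ r ≤ n, ∑ k ∈ Icc 1 r, m (j - k) = walk m n - walk m (n - r) := fun r hr => by
    rw [← hn]
    exact sum_Icc_sub_eq_walk_sub m hr
  have hstep : walk m (n + 1) = walk m n + m j := by rw [walk_succ, hn]
  constructor
  · rintro ⟨hmj, hall⟩ q hq hqN
    rcases eq_or_lt_of_le (Nat.lt_succ_iff.1 hq) with rfl | hq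
    · omega
    · have := hall (n - q) (by omega)
      rw [hS _ (by omega), Nat.sub_sub_self hq.le] at this
      omega
  · intro h
    have hmj : m j = -1 := by
      have := h n (by omega) (by omega)
      rcases hm j with hmj | hmj | hmj <;> omega
    refine ⟨hmj, fun r _ => sum_Icc_sub_nonpos m hsum (fun r hr => ?_) r⟩
    have := h (n - r) (by omega) (by omega)
    rw [hS r (by omega)]
    omega

end CyclicWalk

open StrictRecord CyclicWalk

/-- Let `N ≥ 1` and `m : ZMod N → ℤ` with `m j ∈ {-1,0,1}` for all `j`
and `∑ j, m j < 0`. Then the cardinality of the set of `j` with `m j = -1` and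
`∑_{k=1}^r m (j - k) ≤ 0` for every `r ≥ 1` equals `-∑ j, m j`. -/
theorem stmt_0 (N : ℕ) [NeZero N] (m : ZMod N → ℤ)
    (hm : ∀ j, m j = -1 ∨ m j = 0 ∨ m j = 1)
    (hsum : ∑ j : ZMod N, m j < 0) :
    ({j : ZMod N | m j = -1 ∧ ∀ r : ℕ, 1 ≤ r →
        ∑ k ∈ Finset.Icc 1 r, m (j - (k : ZMod N)) ≤ 0}.ncard : ℤ)
      = -∑ j : ZMod N, m j := by
  have hge : ∀ j, -1 ≤ m j := fun j => by rcases hm j with h | h | h <;> omega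
  rw [show {j : ZMod N | _} = {j | IsStrictRecord (walk m) (j.val + (N + 1))} from
      Set.ext (good_iff_isStrictRecord m hm hsum), ZMod.ncard_setOf_val_add,
    show N + 1 + N = N + N + 1 by omega, Ico_add_one_add_one_eq_Ioc,
    card_filter_isStrictRecord_Ioc (walk_sub_one_le m hge) (Nat.le_add_right N N),
    runMin_add_of_periodic (walk_add_period m) hsum.le (Nat.le_succ N)]
  ring
end

section
/- Let N ≥ 1 be an integer and m : ZMod N → ℤ a function with m(j) ∈ {−1, 0, 1} for every j and with total sum Σ_{j ∈ ZMod N} m(j) < 0. Define A := {j ∈ ZMod N : m(j) = −1 and S_r(j) > 0 for some integer r ≥ 1} and B := {j ∈ ZMod N : m(j) = 1}. For j ∈ A let r(j) be the least integer r ≥ 1 with S_r(j) > 0 and set Φ(j) := j − r(j); for j ∈ B let r'(j) be the least integer r ≥ 0 with Σ_{k=0}^{r} m(j + k) = 0 (such r exists because Σ m < 0) and set Ψ(j) := j + r'(j). Then Φ maps A into B, Ψ maps B into A, and Φ and Ψ are mutually inverse bijections between A and B; in particular A and B have the same cardinality. -/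
/-!
Read `m` as a cyclic word of brackets: `1` opens, `-1` closes, `0` is blank. Then `Ψ` sends an
opening bracket to the closing bracket matching it, which exists because closing brackets are in
the majority, and `Φ` sends a closing bracket to its matching opening bracket, which exists exactly
on `A`. Both directions reduce to one condition `IsMatch i r` on the pair `(i, i + r)`: the partial
sums of `m` forward from `i` stay positive on `[1, r]` and vanish at `r + 1`. As `m` moves by steps
of size at most one, these sums cannot jump over `0`, and the backward sums `S_u(i + r)` are `1`
minus the forward ones.
-/

/-- `S N m j r = ∑_{k=1}^r m (j - k)`, indices taken in `ZMod N`. -/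
noncomputable def S (N : ℕ) (m : ZMod N → ℤ) (j : ZMod N) (r : ℕ) : ℤ :=
  ∑ k ∈ Finset.Icc 1 r, m (j - (k : ZMod N))

/-- `A N m` is the set of `j` with `m j = -1` and `S_r(j) > 0` for some `r ≥ 1`. -/
def A (N : ℕ) (m : ZMod N → ℤ) : Set (ZMod N) :=
  {j | m j = -1 ∧ ∃ r : ℕ, 1 ≤ r ∧ 0 < S N m j r}

/-- `B N m` is the set of `j` with `m j = 1`. -/
def B (N : ℕ) (m : ZMod N → ℤ) : Set (ZMod N) :=
  {j | m j = 1}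

/-- `Φ j = j - r(j)` where `r(j)` is the least `r ≥ 1` with `S_r(j) > 0`. -/
noncomputable def Phi (N : ℕ) (m : ZMod N → ℤ) (j : ZMod N) : ZMod N :=
  j - ((sInf {r : ℕ | 1 ≤ r ∧ 0 < S N m j r} : ℕ) : ZMod N)

/-- `Ψ j = j + r'(j)` where `r'(j)` is the least `r ≥ 0` with `∑_{k=0}^r m (j + k) = 0`. -/
noncomputable def Psi (N : ℕ) (m : ZMod N → ℤ) (j : ZMod N) : ZMod N :=
  j + ((sInf {r : ℕ | ∑ k ∈ Finset.range (r + 1), m (j + (k : ZMod N)) = 0} : ℕ) : ZMod N)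

open Finset

theorem Nat.sInf_setOf_eq {p : ℕ → Prop} {n : ℕ} (hn : p n) (hlt : ∀ k < n, ¬p k) :
    sInf {k | p k} = n :=
  IsLeast.csInf_eq ⟨hn, fun k hk => not_lt.1 fun h => hlt k h hk⟩

theorem Int.exists_eq_zero_of_pos_of_nonpos {f : ℕ → ℤ} (hstep : ∀ n, f n - 1 ≤ f (n + 1))
    {a b : ℕ} (hab : a ≤ b) (ha : 0 < f a) (hb : f b ≤ 0) :
    ∃ c, a < c ∧ c ≤ b ∧ f c = 0 := by
  induction b, hab using Nat.le_induction with
  | base => omega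
  | succ b hab ih =>
    by_cases hfb : f b ≤ 0
    · obtain ⟨c, hac, hcb, hc⟩ := ih hfb
      exact ⟨c, hac, by omega, hc⟩
    · exact ⟨b + 1, by omega, le_rfl, by linarith [hstep b]⟩

def fwdSum (N : ℕ) (m : ZMod N → ℤ) (j : ZMod N) (a : ℕ) : ℤ :=
  ∑ k ∈ range a, m (j + k)

section

variable {N : ℕ} {m : ZMod N → ℤ}

@[simp]
theorem fwdSum_zero (j : ZMod N) : fwdSum N m j 0 = 0 := sum_range_zero _

theorem fwdSum_succ (j : ZMod N) (a : ℕ) : fwdSum N m j (a + 1) = fwdSum N m j a + m (j + a) :=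
  sum_range_succ _ _

@[simp]
theorem fwdSum_one (j : ZMod N) : fwdSum N m j 1 = m j := by simp [fwdSum]

@[simp]
theorem S_zero (j : ZMod N) : S N m j 0 = 0 := by simp [S]

theorem S_succ (j : ZMod N) (r : ℕ) : S N m j (r + 1) = S N m j r + m (j - (r + 1 : ℕ)) :=
  sum_Icc_succ_top (by omega) _

theorem S_add_natCast (j : ZMod N) {b s : ℕ} (hs : s ≤ b) :
    S N m (j + b) s = fwdSum N m j b - fwdSum N m j (b - s) := by
  induction s with
  | zero => simp
  | succ s ih =>
    obtain ⟨c, rfl⟩ : ∃ c, b = c + (s + 1) := ⟨b - (s + 1), by omega⟩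
    have hidx : j + ((c + (s + 1) : ℕ) : ZMod N) - ((s + 1 : ℕ) : ZMod N) = j + c := by
      push_cast
      ring
    rw [S_succ, ih (by omega), hidx, show c + (s + 1) - s = c + 1 by omega, fwdSum_succ,
      Nat.add_sub_cancel]
    ring

theorem fwdSum_self_eq_sum [NeZero N] (j : ZMod N) : fwdSum N m j N = ∑ x, m x := by
  obtain ⟨n, rfl⟩ : ∃ n, N = n + 1 := Nat.exists_eq_succ_of_ne_zero (NeZero.ne N)
  rw [fwdSum, ← Fin.sum_univ_eq_sum_range (fun k => m (j + k))]
  exact Fintype.sum_equiv (Equiv.addLeft j) _ _ fun i =>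
    congrArg (fun x => m (j + x)) (ZMod.natCast_zmod_val i)

structure IsMatch (N : ℕ) (m : ZMod N → ℤ) (i : ZMod N) (r : ℕ) : Prop where
  one_le : 1 ≤ r
  fwdSum_pos : ∀ a, 1 ≤ a → a ≤ r → 0 < fwdSum N m i a
  fwdSum_succ_eq_zero : fwdSum N m i (r + 1) = 0

namespace IsMatch

variable {i : ZMod N} {r : ℕ}

theorem Psi_eq (h : IsMatch N m i r) : Psi N m i = i + r := by
  obtain ⟨hr, hpos, hzero⟩ := h
  have : sInf {s | fwdSum N m i (s + 1) = 0} = r :=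
    Nat.sInf_setOf_eq hzero fun s hs => (hpos (s + 1) (by omega) hs).ne'
  rw [Psi, ← this]
  rfl

theorem mem_B (hm : ∀ j, m j = -1 ∨ m j = 0 ∨ m j = 1) (h : IsMatch N m i r) :
    i ∈ B N m := by
  have : 0 < m i := fwdSum_one (m := m) i ▸ h.fwdSum_pos 1 le_rfl h.one_le
  show m i = 1
  rcases hm i with h | h | h <;> omega

theorem fwdSum_eq_one (hm : ∀ j, m j = -1 ∨ m j = 0 ∨ m j = 1) (h : IsMatch N m i r) :
    fwdSum N m i r = 1 := by
  have := h.fwdSum_pos r h.one_le le_rfl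
  have := h.fwdSum_succ_eq_zero
  have := fwdSum_succ (m := m) i r
  rcases hm (i + r) with h' | h' | h' <;> omega

theorem S_add_eq (hm : ∀ j, m j = -1 ∨ m j = 0 ∨ m j = 1) (h : IsMatch N m i r) {u : ℕ}
    (hu : u ≤ r) :
    S N m (i + r) u = 1 - fwdSum N m i (r - u) := by
  rw [S_add_natCast i hu, h.fwdSum_eq_one hm]

theorem add_mem_A (hm : ∀ j, m j = -1 ∨ m j = 0 ∨ m j = 1) (h : IsMatch N m i r) :
    i + r ∈ A N m := by
  refine ⟨?_, r, h.one_le, by simp [h.S_add_eq hm le_rfl]⟩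
  have := fwdSum_succ (m := m) i r
  have := h.fwdSum_eq_one hm
  have := h.fwdSum_succ_eq_zero
  omega

theorem Phi_add_eq (hm : ∀ j, m j = -1 ∨ m j = 0 ∨ m j = 1) (h : IsMatch N m i r) :
    Phi N m (i + r) = i := by
  have : sInf {u | 1 ≤ u ∧ 0 < S N m (i + r) u} = r := by
    refine Nat.sInf_setOf_eq ⟨h.one_le, by simp [h.S_add_eq hm le_rfl]⟩
      fun u hu ⟨hu1, hpos⟩ => ?_
    rw [h.S_add_eq hm hu.le] at hpos
    have := h.fwdSum_pos (r - u) (by omega) (by omega)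
    omega
  rw [Phi, this, add_sub_cancel_right]

end IsMatch

theorem exists_isMatch_Phi_of_mem_A (hm : ∀ j, m j = -1 ∨ m j = 0 ∨ m j = 1) {j : ZMod N}
    (hj : j ∈ A N m) : ∃ r, IsMatch N m (Phi N m j) r ∧ Phi N m j + r = j := by
  obtain ⟨hj1, hex⟩ := hj
  set r := sInf {r | 1 ≤ r ∧ 0 < S N m j r}
  obtain ⟨hr, hpos⟩ : 1 ≤ r ∧ 0 < S N m j r := Nat.sInf_mem hex
  have hle : ∀ u < r, S N m j u ≤ 0 := fun u hu => by
    rcases u.eq_zero_or_pos with rfl | hu0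
    · simp
    · exact not_lt.1 fun h => Nat.notMem_of_lt_sInf hu ⟨hu0, h⟩
  have hSr : S N m j r = 1 := by
    have := S_succ (m := m) j (r - 1)
    rw [Nat.sub_add_cancel hr] at this
    have := hle (r - 1) (by omega)
    rcases hm (j - r) with h | h | h <;> omega
  have hij : Phi N m j + r = j := sub_add_cancel j r
  have hfwd : ∀ a ≤ r, fwdSum N m (Phi N m j) a = 1 - S N m j (r - a) := fun a ha => by
    have h := S_add_natCast (m := m) (Phi N m j) (Nat.sub_le r a)
    have h0 := S_add_natCast (m := m) (Phi N m j) (le_refl r)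
    rw [hij, Nat.sub_sub_self ha] at h
    rw [hij, Nat.sub_self, fwdSum_zero] at h0
    omega
  refine ⟨r, ⟨hr, fun a ha1 har => ?_, ?_⟩, hij⟩
  · have := hle (r - a) (by omega)
    rw [hfwd a har]
    omega
  · rw [fwdSum_succ, hfwd r le_rfl, hij, hj1, Nat.sub_self, S_zero]
    rfl

theorem exists_isMatch_of_mem_B [NeZero N] (hm : ∀ j, m j = -1 ∨ m j = 0 ∨ m j = 1)
    (hsum : ∑ j, m j < 0) {j : ZMod N} (hj : j ∈ B N m) : ∃ r, IsMatch N m j r := by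
  have hj1 : fwdSum N m j 1 = 1 := (fwdSum_one j).trans hj
  have hstep : ∀ n, fwdSum N m j n - 1 ≤ fwdSum N m j (n + 1) := fun n => by
    rw [fwdSum_succ]
    rcases hm (j + n) with h | h | h <;> omega
  obtain ⟨c, hc1, -, hc⟩ := Int.exists_eq_zero_of_pos_of_nonpos hstep
    (Nat.one_le_iff_ne_zero.2 (NeZero.ne N)) (by omega) (by rw [fwdSum_self_eq_sum]; omega)
  have hne : {s | fwdSum N m j (s + 1) = 0}.Nonempty := ⟨c - 1, by
    rwa [Set.mem_ofPred_eq, Nat.sub_add_cancel hc1.le]⟩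
  set r := sInf {s | fwdSum N m j (s + 1) = 0}
  have hr : fwdSum N m j (r + 1) = 0 := Nat.sInf_mem hne
  refine ⟨r, Nat.one_le_iff_ne_zero.2 fun h0 => ?_, fun a ha1 har => ?_, hr⟩
  · rw [h0, hj1] at hr
    exact one_ne_zero hr
  · by_contra! hle
    obtain ⟨c', hc'1, hc'a, hc'⟩ :=
      Int.exists_eq_zero_of_pos_of_nonpos hstep ha1 (by omega) hle
    refine Nat.notMem_of_lt_sInf (show c' - 1 < r by omega) ?_
    rwa [Set.mem_ofPred_eq, Nat.sub_add_cancel hc'1.le]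

end

/-- `Φ` maps `A` into `B`, `Ψ` maps `B` into `A`, they are mutually
inverse bijections between `A` and `B`, and `A` and `B` have the same cardinality. -/
theorem stmt_1 (N : ℕ) [NeZero N] (m : ZMod N → ℤ)
    (hm : ∀ j, m j = -1 ∨ m j = 0 ∨ m j = 1)
    (hsum : ∑ j : ZMod N, m j < 0) :
    Set.MapsTo (Phi N m) (A N m) (B N m) ∧
    Set.MapsTo (Psi N m) (B N m) (A N m) ∧
    Set.InvOn (Psi N m) (Phi N m) (A N m) (B N m) ∧
    (A N m).ncard = (B N m).ncard := by
  have hPhi : Set.MapsTo (Phi N m) (A N m) (B N m) := fun j hj => by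
    obtain ⟨r, h, -⟩ := exists_isMatch_Phi_of_mem_A hm hj
    exact h.mem_B hm
  have hPsi : Set.MapsTo (Psi N m) (B N m) (A N m) := fun j hj => by
    obtain ⟨r, h⟩ := exists_isMatch_of_mem_B hm hsum hj
    rw [h.Psi_eq]
    exact h.add_mem_A hm
  have hinv : Set.InvOn (Psi N m) (Phi N m) (A N m) (B N m) := by
    constructor
    · intro j hj
      obtain ⟨r, h, hr⟩ := exists_isMatch_Phi_of_mem_A hm hj
      rw [h.Psi_eq, hr]
    · intro j hj
      obtain ⟨r, h⟩ := exists_isMatch_of_mem_B hm hsum hj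
      rw [h.Psi_eq, h.Phi_add_eq hm]
  exact ⟨hPhi, hPsi, hinv, (hinv.bijOn hPhi hPsi).ncard_eq⟩
end

section
/- Let V be a finite-dimensional vector space over ℚ, let R be a finite set of nonzero linear functionals on V, and let R⁺ ⊆ R be a subset such that R is the disjoint union of R⁺ and −R⁺ := {−α : α ∈ R⁺}. Let N ≥ 1 be an integer and δ : V ≃ V a linear automorphism with δ^N = id such that the map α ↦ α ∘ δ sends R bijectively onto R. Let μ ∈ V satisfy α(μ) ∈ {−1, 0, 1} for every α ∈ R, set ν := (1/N) · Σ_{k=1}^{N} δ^k(μ), and assume α(ν) ≤ 0 for every α ∈ R⁺. Define R_C := {α ∈ R : α(μ) = −1, α(ν) < 0, and Σ_{k=1}^{r} α(δ^k(μ)) ≤ 0 for every integer r ≥ 1}. Then the cardinality of R_C equals −Σ_{α ∈ R⁺} α(ν). -/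
/-!
Write `a_α k = α (δ^(k+1) μ)`, so that `α ↦ α ∘ δ` shifts these sequences, and let `peak a` be the
largest partial sum of `a` (it exists because the sequence is periodic with nonpositive period
sum `N α(ν)`). Since the steps are integers `≥ -1`, `peak a = max 0 (a 0 + peak (a ∘ succ))`
exceeds `peak (a ∘ succ) + a 0` by exactly one when `α ∘ δ ∈ R_C`, and by zero otherwise.
Summing over the `δ`-stable set `{α ∈ R | α(ν) < 0}` the peaks cancel, leaving
`#R_C = -∑ α(δ μ)`. This sum equals `∑ α(ν)` because `∑ α` is `δ`-invariant, and that is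
`∑_{R⁺} α(ν)` because antidominance puts every root with `α(ν) < 0` in `R⁺`.
-/

open Finset Function

theorem Finset.sum_Icc_one_eq_sum_range {M : Type*} [AddCommMonoid M] (f : ℕ → M) (r : ℕ) :
    ∑ k ∈ Icc 1 r, f k = ∑ k ∈ range r, f (k + 1) := by
  rw [← Ico_add_one_right_eq_Icc, range_eq_Ico, sum_Ico_add']

theorem Finset.sum_comp_of_mapsTo {ι M : Type*} [AddCommMonoid M] {S : Finset ι} {Φ : ι → ι}
    (hΦ : Set.InjOn Φ S) (hS : ∀ x ∈ S, Φ x ∈ S) (F : ι → M) :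
    ∑ x ∈ S, F (Φ x) = ∑ x ∈ S, F x := by
  classical
  have himage : S.image Φ = S :=
    eq_of_subset_of_card_le (image_subset_iff.2 hS) (card_image_of_injOn hΦ).ge
  rw [← sum_image hΦ, himage]

theorem Finset.natCast_card_eq_neg_sum_of_telescoping {ι K : Type*} [AddCommGroupWithOne K]
    [DecidableEq ι] {S C : Finset ι} {Φ : ι → ι} (hΦ : Set.InjOn Φ S) (hS : ∀ x ∈ S, Φ x ∈ S)
    (hC : C ⊆ S) (f g : ι → K) (h : ∀ x ∈ S, f x = f (Φ x) + g x + if Φ x ∈ C then 1 else 0) :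
    (#C : K) = -∑ x ∈ S, g x := by
  have hsum := sum_congr rfl h
  rw [sum_add_distrib, sum_add_distrib, sum_comp_of_mapsTo hΦ hS f,
    sum_comp_of_mapsTo hΦ hS fun y => if y ∈ C then (1 : K) else 0, sum_ite_mem,
    inter_eq_right.2 hC, sum_const, nsmul_one, add_assoc, left_eq_add] at hsum
  exact eq_neg_of_add_eq_zero_right hsum

theorem Finset.sum_eq_sum_filter_neg {ι K : Type*} [InvolutiveNeg ι] [AddCommGroup K]
    [LinearOrder K] [IsOrderedAddMonoid K] {R Rpos : Finset ι} (f : ι → K) (hf : ∀ x, f (-x) = -f x)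
    (hsplit : ∀ x, x ∈ R ↔ x ∈ Rpos ∨ -x ∈ Rpos) (hpos : ∀ x ∈ Rpos, f x ≤ 0) :
    ∑ x ∈ Rpos, f x = ∑ x ∈ R with f x < 0, f x := by
  rw [← sum_filter_of_ne fun x hx hfx => (hpos x hx).lt_of_ne hfx]
  congr 1
  ext x
  simp only [mem_filter, hsplit]
  constructor
  · rintro ⟨hx, hfx⟩
    exact ⟨Or.inl hx, hfx⟩
  · rintro ⟨hx | hx, hfx⟩
    · exact ⟨hx, hfx⟩
    · have := hpos _ hx
      rw [hf, neg_nonpos] at this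
      exact absurd hfx this.not_gt

namespace Function.Periodic

variable {M : Type*} [AddCancelCommMonoid M] {f : ℕ → M} {N : ℕ}

theorem sum_range_comp_succ (hf : Periodic f N) :
    ∑ k ∈ range N, f (k + 1) = ∑ k ∈ range N, f k := by
  have h := (sum_range_succ' f N).symm.trans (sum_range_succ f N)
  rw [hf.eq] at h
  exact add_right_cancel h

theorem sum_range_comp_add (hf : Periodic f N) (m : ℕ) :
    ∑ k ∈ range N, f (m + k) = ∑ k ∈ range N, f k := by
  induction m with
  | zero => simp
  | succ m ih =>
    rw [← ih, ← (hf.const_add m).sum_range_comp_succ]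
    simp only [add_assoc, add_comm 1]

theorem sum_range_add_period (hf : Periodic f N) (r : ℕ) :
    ∑ k ∈ range (r + N), f k = ∑ k ∈ range r, f k + ∑ k ∈ range N, f k := by
  rw [sum_range_add, hf.sum_range_comp_add]

end Function.Periodic

section PeakDef

variable {K : Type*} [AddCommMonoid K] [LinearOrder K] {N : ℕ} {a : ℕ → K}

def peak (N : ℕ) (a : ℕ → K) : K :=
  (range (N + 1)).sup' nonempty_range_add_one fun r => ∑ k ∈ range r, a k

theorem peak_nonneg : 0 ≤ peak N a :=
  le_sup'_of_le _ (mem_range.2 N.succ_pos) (by simp)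

theorem exists_sum_range_eq_peak : ∃ r, ∑ k ∈ range r, a k = peak N a := by
  obtain ⟨r, -, hr⟩ := exists_mem_eq_sup' nonempty_range_add_one fun r => ∑ k ∈ range r, a k
  exact ⟨r, hr.symm⟩

end PeakDef

theorem exists_intCast_eq_peak {K : Type*} [AddCommGroupWithOne K] [LinearOrder K] {N : ℕ}
    {a : ℕ → K} (ha : ∀ k, ∃ n : ℤ, a k = n) : ∃ n : ℤ, peak N a = n := by
  choose b hb using ha
  obtain ⟨r, hr⟩ := exists_sum_range_eq_peak (N := N) (a := a)
  exact ⟨∑ k ∈ range r, b k, by simp [← hr, hb]⟩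

section Peak

variable {K : Type*} [Ring K] [LinearOrder K] [IsStrictOrderedRing K] {N : ℕ} {a : ℕ → K}

theorem isGreatest_peak (ha : Periodic a N) (hN : 0 < N) (hsum : ∑ k ∈ range N, a k ≤ 0) :
    IsGreatest (Set.range fun r => ∑ k ∈ range r, a k) (peak N a) := by
  refine ⟨exists_sum_range_eq_peak, ?_⟩
  rintro _ ⟨r, rfl⟩
  dsimp only
  induction r using Nat.strong_induction_on with
  | _ r ih =>
    rcases le_or_gt r N with hr | hr
    · exact le_sup' (fun r => ∑ k ∈ range r, a k) (mem_range.2 (Nat.lt_succ_of_le hr))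
    · obtain ⟨s, rfl⟩ := Nat.exists_eq_add_of_le hr.le
      rw [add_comm, ha.sum_range_add_period]
      exact (add_le_of_nonpos_right hsum).trans (ih s (by omega))

theorem peak_eq_zero_iff (ha : Periodic a N) (hN : 0 < N)
    (hsum : ∑ k ∈ range N, a k ≤ 0) : peak N a = 0 ↔ ∀ r, ∑ k ∈ range r, a k ≤ 0 := by
  obtain ⟨⟨r, hr⟩, hle⟩ := isGreatest_peak ha hN hsum
  constructor
  · rintro h r
    exact h ▸ hle ⟨r, rfl⟩
  · intro h
    exact le_antisymm (hr ▸ h r) peak_nonneg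

theorem peak_eq_max (ha : Periodic a N) (hN : 0 < N)
    (hsum : ∑ k ∈ range N, a k ≤ 0) : peak N a = max 0 (a 0 + peak N fun k => a (k + 1)) := by
  obtain ⟨⟨s, hs⟩, hle⟩ :=
    isGreatest_peak (ha.add_const 1) hN (ha.sum_range_comp_succ ▸ hsum)
  refine (isGreatest_peak ha hN hsum).unique ⟨?_, ?_⟩
  · rcases le_total 0 (a 0 + peak N fun k => a (k + 1)) with h | h
    · rw [max_eq_right h, ← hs]
      exact ⟨s + 1, by dsimp only; rw [sum_range_succ', add_comm]⟩
    · rw [max_eq_left h]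
      exact ⟨0, sum_range_zero _⟩
  · rintro _ ⟨_ | r, rfl⟩
    · simp
    · dsimp only
      rw [sum_range_succ', add_comm]
      exact le_max_of_le_right (add_le_add le_rfl (hle ⟨r, rfl⟩))

theorem peak_eq_peak_succ_add (ha : Periodic a N) (hN : 0 < N)
    (hsum : ∑ k ∈ range N, a k ≤ 0) (hint : ∀ k, ∃ n : ℤ, a k = n) (h0 : -1 ≤ a 0) :
    peak N a = peak N (fun k => a (k + 1)) + a 0 +
      if a 0 = -1 ∧ peak N (fun k => a (k + 1)) = 0 then 1 else 0 := by
  obtain ⟨m, hm⟩ := hint 0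
  obtain ⟨n, hn⟩ := exists_intCast_eq_peak (N := N) fun k => hint (k + 1)
  have hn0 : 0 ≤ n := by exact_mod_cast hn ▸ peak_nonneg
  have hm1 : -1 ≤ m := by exact_mod_cast hm ▸ h0
  rw [peak_eq_max ha hN hsum, hm, hn]
  split_ifs with h
  · rw [h.1, h.2]
    norm_num
  · have h' : ¬(m = -1 ∧ n = 0) := by exact_mod_cast h
    rw [max_eq_right (by exact_mod_cast (by omega : 0 ≤ m + n)), add_zero, add_comm]

end Peak

namespace LinearEquiv

variable {R M : Type*} [Semiring R] [AddCommMonoid M] [Module R M] (e : M ≃ₗ[R] M)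

theorem pow_succ_apply (k : ℕ) (v : M) : (e ^ (k + 1)) v = e ((e ^ k) v) := by
  rw [pow_succ']
  rfl

theorem periodic_pow_apply {N : ℕ} (heN : e ^ N = 1) (v : M) :
    Periodic (fun k => (e ^ k) v) N := fun k => by
  simp only [pow_add, heN, mul_one]

end LinearEquiv

section OrbitSeq

variable {K V : Type*} [Field K] [AddCommGroup V] [Module K V] (δ : V ≃ₗ[K] V) (μ : V) {N : ℕ}

def orbitSeq (α : Module.Dual K V) (k : ℕ) : K := α ((δ ^ (k + 1)) μ)

theorem orbitSeq_zero (α : Module.Dual K V) : orbitSeq δ μ α 0 = δ.dualMap α μ := by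
  simp [orbitSeq]

theorem orbitSeq_succ (α : Module.Dual K V) (k : ℕ) :
    orbitSeq δ μ α (k + 1) = orbitSeq δ μ (δ.dualMap α) k := by
  simp only [orbitSeq, LinearEquiv.dualMap_apply, LinearEquiv.pow_succ_apply δ (k + 1)]

theorem periodic_orbitSeq (hδN : δ ^ N = 1) (α : Module.Dual K V) :
    Periodic (orbitSeq δ μ α) N := fun k => by
  simp only [orbitSeq, ((δ.periodic_pow_apply hδN μ).add_const 1) k]

theorem orbitSeq_mem {P : K → Prop} {R : Finset (Module.Dual K V)}
    (hR : ∀ α ∈ R, δ.dualMap α ∈ R) (hP : ∀ α ∈ R, P (α μ)) {α : Module.Dual K V} (hα : α ∈ R)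
    (k : ℕ) : P (orbitSeq δ μ α k) := by
  induction k generalizing α with
  | zero => exact orbitSeq_zero δ μ α ▸ hP _ (hR α hα)
  | succ k ih => exact orbitSeq_succ δ μ α k ▸ ih (hR α hα)

variable {ν : V}

theorem sum_range_orbitSeq (hN : (N : K) ≠ 0) (hν : ν = (N : K)⁻¹ • ∑ k ∈ Icc 1 N, (δ ^ k) μ)
    (α : Module.Dual K V) : ∑ k ∈ range N, orbitSeq δ μ α k = N * α ν := by
  rw [hν, map_smul, map_sum, smul_eq_mul, sum_Icc_one_eq_sum_range,
    mul_inv_cancel_left₀ hN]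
  rfl

theorem map_eq_self_of_pow_eq_one (hδN : δ ^ N = 1)
    (hν : ν = (N : K)⁻¹ • ∑ k ∈ Icc 1 N, (δ ^ k) μ) : δ ν = ν := by
  rw [hν, map_smul, map_sum, sum_Icc_one_eq_sum_range, sum_Icc_one_eq_sum_range]
  simp_rw [← LinearEquiv.pow_succ_apply]
  rw [((δ.periodic_pow_apply hδN μ).add_const 1).sum_range_comp_succ]

theorem sum_apply_pow_apply {S : Finset (Module.Dual K V)} (hS : ∀ α ∈ S, δ.dualMap α ∈ S)
    (k : ℕ) (v : V) : ∑ α ∈ S, α ((δ ^ k) v) = ∑ α ∈ S, α v := by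
  induction k generalizing v with
  | zero => simp
  | succ k ih =>
    rw [← ih v, δ.pow_succ_apply]
    exact sum_comp_of_mapsTo δ.dualMap.injective.injOn hS fun α => α ((δ ^ k) v)

theorem sum_apply_eq_sum_apply_of_mapsTo {S : Finset (Module.Dual K V)}
    (hS : ∀ α ∈ S, δ.dualMap α ∈ S) (hN : (N : K) ≠ 0)
    (hν : ν = (N : K)⁻¹ • ∑ k ∈ Icc 1 N, (δ ^ k) μ) : ∑ α ∈ S, α ν = ∑ α ∈ S, α μ := by
  simp_rw [hν, map_smul, map_sum, smul_eq_mul, ← mul_sum]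
  rw [sum_comm]
  simp_rw [sum_apply_pow_apply δ hS]
  rw [sum_const, Nat.card_Icc, Nat.add_sub_cancel, nsmul_eq_mul, inv_mul_cancel_left₀ hN]

variable [LinearOrder K]

open Classical in
noncomputable def centralLeafRoots (R : Finset (Module.Dual K V)) (δ : V ≃ₗ[K] V) (μ ν : V) :
    Finset (Module.Dual K V) :=
  {α ∈ R | α μ = -1 ∧ α ν < 0 ∧ ∀ r : ℕ, 1 ≤ r → ∑ k ∈ Icc 1 r, α ((δ ^ k) μ) ≤ 0}

theorem mem_centralLeafRoots {R : Finset (Module.Dual K V)} {α : Module.Dual K V} :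
    α ∈ centralLeafRoots R δ μ ν ↔
      α ∈ R ∧ α μ = -1 ∧ α ν < 0 ∧ ∀ r : ℕ, 1 ≤ r → ∑ k ∈ Icc 1 r, α ((δ ^ k) μ) ≤ 0 := by
  simp [centralLeafRoots]

theorem coe_centralLeafRoots (R : Finset (Module.Dual K V)) :
    (centralLeafRoots R δ μ ν : Set (Module.Dual K V)) = {α | α ∈ R ∧ α μ = -1 ∧ α ν < 0 ∧
      ∀ r : ℕ, 1 ≤ r → ∑ k ∈ Icc 1 r, α ((δ ^ k) μ) ≤ 0} := by
  ext α
  exact mem_centralLeafRoots δ μ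

theorem centralLeafRoots_subset (R : Finset (Module.Dual K V)) :
    centralLeafRoots R δ μ ν ⊆ {α ∈ R | α ν < 0} := fun α hα => by
  obtain ⟨hαR, -, hαν, -⟩ := (mem_centralLeafRoots δ μ).1 hα
  exact mem_filter.2 ⟨hαR, hαν⟩

variable [IsStrictOrderedRing K]

theorem sum_range_orbitSeq_nonpos (hN : 0 < N) (hν : ν = (N : K)⁻¹ • ∑ k ∈ Icc 1 N, (δ ^ k) μ)
    {α : Module.Dual K V} (hαν : α ν ≤ 0) : ∑ k ∈ range N, orbitSeq δ μ α k ≤ 0 := by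
  rw [sum_range_orbitSeq δ μ (by positivity) hν]
  exact mul_nonpos_of_nonneg_of_nonpos (by positivity) hαν

theorem peak_orbitSeq_eq_zero_iff (hδN : δ ^ N = 1) (hN : 0 < N)
    (hν : ν = (N : K)⁻¹ • ∑ k ∈ Icc 1 N, (δ ^ k) μ) {α : Module.Dual K V} (hαν : α ν ≤ 0) :
    peak N (orbitSeq δ μ α) = 0 ↔ ∀ r : ℕ, 1 ≤ r → ∑ k ∈ Icc 1 r, α ((δ ^ k) μ) ≤ 0 := by
  rw [peak_eq_zero_iff (periodic_orbitSeq δ μ hδN α) hN (sum_range_orbitSeq_nonpos δ μ hN hν hαν)]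
  simp_rw [sum_Icc_one_eq_sum_range]
  constructor
  · exact fun h r _ => h r
  · rintro h (_ | r)
    · simp
    · exact h _ r.succ_pos

theorem peak_orbitSeq_eq (hδN : δ ^ N = 1) (hN : 0 < N)
    (hν : ν = (N : K)⁻¹ • ∑ k ∈ Icc 1 N, (δ ^ k) μ) [DecidableEq (Module.Dual K V)]
    {R : Finset (Module.Dual K V)} (hR : ∀ α ∈ R, δ.dualMap α ∈ R)
    (hμ : ∀ α ∈ R, α μ = -1 ∨ α μ = 0 ∨ α μ = 1)
    {α : Module.Dual K V} (hα : α ∈ R) (hαν : α ν < 0) :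
    peak N (orbitSeq δ μ α) = peak N (orbitSeq δ μ (δ.dualMap α)) + δ.dualMap α μ +
      if δ.dualMap α ∈ centralLeafRoots R δ μ ν then 1 else 0 := by
  have hint : ∀ k, ∃ n : ℤ, orbitSeq δ μ α k = n :=
    orbitSeq_mem δ μ hR (P := fun x => ∃ n : ℤ, x = n) (fun β hβ => by
      rcases hμ β hβ with h | h | h
      exacts [⟨-1, by simp [h]⟩, ⟨0, by simp [h]⟩, ⟨1, by simp [h]⟩]) hα
  have h0 : -1 ≤ orbitSeq δ μ α 0 := orbitSeq_mem δ μ hR (fun β hβ => by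
    rcases hμ β hβ with h | h | h <;> rw [h] <;> norm_num) hα 0
  have hΦν : δ.dualMap α ν = α ν := by
    rw [LinearEquiv.dualMap_apply, map_eq_self_of_pow_eq_one δ μ hδN hν]
  have hmem : δ.dualMap α ∈ centralLeafRoots R δ μ ν ↔
      δ.dualMap α μ = -1 ∧ peak N (orbitSeq δ μ (δ.dualMap α)) = 0 := by
    rw [mem_centralLeafRoots, peak_orbitSeq_eq_zero_iff δ μ hδN hN hν (hΦν ▸ hαν.le), hΦν]
    simp [hR α hα, hαν]
  rw [peak_eq_peak_succ_add (periodic_orbitSeq δ μ hδN α) hN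
    (sum_range_orbitSeq_nonpos δ μ hN hν hαν.le) hint h0, orbitSeq_zero]
  simp only [orbitSeq_succ, hmem]

end OrbitSeq

theorem stmt_2_general {V : Type*} [AddCommGroup V] [Module ℚ V]
    (R Rpos : Finset (Module.Dual ℚ V))
    (hsplit : ∀ α : Module.Dual ℚ V, α ∈ R ↔ (α ∈ Rpos ∨ -α ∈ Rpos))
    (N : ℕ) (hN : 1 ≤ N)
    (δ : V ≃ₗ[ℚ] V) (hδN : δ ^ N = 1)
    (hδR : ∀ α ∈ R, α.comp (δ : V →ₗ[ℚ] V) ∈ R)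
    (μ : V) (hμ : ∀ α ∈ R, α μ = -1 ∨ α μ = 0 ∨ α μ = 1)
    (ν : V) (hν : ν = (N : ℚ)⁻¹ • ∑ k ∈ Finset.Icc 1 N, (δ ^ k) μ)
    (hanti : ∀ α ∈ Rpos, α ν ≤ 0) :
    (({α : Module.Dual ℚ V | α ∈ R ∧ α μ = -1 ∧ α ν < 0 ∧
        ∀ r : ℕ, 1 ≤ r → ∑ k ∈ Finset.Icc 1 r, α ((δ ^ k) μ) ≤ 0}).ncard : ℚ)
      = -∑ α ∈ Rpos, α ν := by
  classical
  have hδν := map_eq_self_of_pow_eq_one δ μ hδN hν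
  have hS : ∀ α ∈ R.filter (· ν < 0), δ.dualMap α ∈ R.filter (· ν < 0) := fun α hα => by
    rw [mem_filter] at hα ⊢
    exact ⟨hδR α hα.1, by rw [LinearEquiv.dualMap_apply, hδν]; exact hα.2⟩
  rw [← coe_centralLeafRoots, Set.ncard_coe_finset,
    natCast_card_eq_neg_sum_of_telescoping δ.dualMap.injective.injOn hS
      (centralLeafRoots_subset δ μ R) _ _ fun α hα =>
      peak_orbitSeq_eq δ μ hδN hN hν hδR hμ (mem_filter.1 hα).1 (mem_filter.1 hα).2,
    sum_comp_of_mapsTo δ.dualMap.injective.injOn hS fun α => α μ,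
    ← sum_apply_eq_sum_apply_of_mapsTo δ μ hS (by positivity) hν,
    sum_eq_sum_filter_neg (· ν) (fun α => rfl) hsplit hanti]

/-- Let `V` be a finite-dimensional `ℚ`-vector space, `R` a finite set of
nonzero linear functionals, `Rpos ⊆ R` with `R` the disjoint union of `Rpos` and
`-Rpos`. Let `δ : V ≃ₗ V` with `δ ^ N = 1` permuting `R` (via `α ↦ α ∘ δ`), `μ ∈ V`
with `α μ ∈ {-1,0,1}` for all `α ∈ R`, `ν = (1/N) • ∑_{k=1}^N δ^k μ` with `α ν ≤ 0`
for all `α ∈ Rpos`. Then the cardinality of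
`R_C = {α ∈ R | α μ = -1, α ν < 0, ∑_{k=1}^r α (δ^k μ) ≤ 0 for all r ≥ 1}`
equals `-∑_{α ∈ Rpos} α ν`. -/
theorem stmt_2 {V : Type*} [AddCommGroup V] [Module ℚ V] [FiniteDimensional ℚ V]
    (R Rpos : Finset (Module.Dual ℚ V))
    (hR0 : ∀ α ∈ R, α ≠ 0)
    (hsplit : ∀ α : Module.Dual ℚ V, α ∈ R ↔ (α ∈ Rpos ∨ -α ∈ Rpos))
    (hdisj : ∀ α ∈ Rpos, -α ∉ Rpos)
    (N : ℕ) (hN : 1 ≤ N)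
    (δ : V ≃ₗ[ℚ] V) (hδN : δ ^ N = 1)
    (hδR : ∀ α ∈ R, α.comp (δ : V →ₗ[ℚ] V) ∈ R)
    (μ : V) (hμ : ∀ α ∈ R, α μ = -1 ∨ α μ = 0 ∨ α μ = 1)
    (ν : V) (hν : ν = (N : ℚ)⁻¹ • ∑ k ∈ Finset.Icc 1 N, (δ ^ k) μ)
    (hanti : ∀ α ∈ Rpos, α ν ≤ 0) :
    (({α : Module.Dual ℚ V | α ∈ R ∧ α μ = -1 ∧ α ν < 0 ∧
        ∀ r : ℕ, 1 ≤ r → ∑ k ∈ Finset.Icc 1 r, α ((δ ^ k) μ) ≤ 0}).ncard : ℚ)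
      = -∑ α ∈ Rpos, α ν :=
  stmt_2_general R Rpos hsplit N hN δ hδN hδR μ hμ ν hν hanti
end

section
/- Let p be a prime and k an algebraically closed field of characteristic p, with Witt vectors W(k) and Frobenius automorphism σ. Let I be a finite set, δ : I ≃ I a permutation, and m : I → ℤ a function with m(j) ∈ {−1, 0, 1} for all j, such that for every δ-orbit O ⊆ I one has Σ_{j ∈ O} m(j) < 0. Let ε : I → W(k)ˣ be any family of units and t : I → k a function with t(j) = 0 whenever m(j) ≠ −1; write τ_j ∈ W(k) for the Teichmüller lift of t(j). Define C := {j ∈ I : m(j) = −1 and Σ_{k=1}^{r} m(δ^{−k}(j)) ≤ 0 for every integer r ≥ 1}. Then there exists a family x : I → W(k) satisfying p · τ_j = −p · x_j + p^{1 + m(δ^{−1}(j))} · ε_j · σ(x_{δ^{−1}(j)}) for every j ∈ I if and only if t(j) = 0 for every j ∉ C. -/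
/-!
Write `S_r(j) = ∑_{a=1}^r m(δ⁻ᵃ j)`. If a solution `x` exists while `τ_j` is a unit and
`S_r(j) > 0`, choose such a pair with `r` minimal. Minimality forces `τ = 0` along
`δ⁻¹ j, …, δ⁻ʳ j` wherever `S_a(j) ≤ 0`, and walking back from `a = r` to `a = 0` the equations
give `p^(1 - S_a(j)) ∣ τ + x` at `δ⁻ᵃ j`; so `p ∣ τ_j + x_j`. The equation at `δ j` has
exponent `1 + m_j = 0` and gives `p ∣ σ(x_j)`, hence `p ∣ τ_j`, which is absurd.

Conversely, negative orbit sums make `r ↦ S_r(j)` bounded above, and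
`w_j = max(0, sup_r S_r(j))` satisfies `m(δ⁻¹ j) + w(δ⁻¹ j) ≤ w_j`, with `w_j = 0` wherever
`τ_j ≠ 0`. Substituting `x = p^w y` turns the system into a fixed-point equation `y = Φ y` for a
`σ⁻¹`-semilinear map that multiplies `p`-adic differences at `i` by `p^(a_i)`, where
`a_i = w(δ i) - m_i - w_i ≥ 0`. Along every orbit the `a_i` telescope to `-∑ m > 0`, so
`Φ^(ord δ)` is a `p`-adic contraction, and `p`-adic completeness of `W(k)` provides the fixed point.
-/

open scoped Classical

open Finset

namespace Equiv.Perm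

variable {I : Type*} (g : Perm I)

theorem sum_range_orderOf_pow_succ_apply {M : Type*} [AddCommMonoid M] (f : I → M) (j : I) :
    ∑ b ∈ range (orderOf g), f ((g ^ (b + 1)) j) = ∑ b ∈ range (orderOf g), f ((g ^ b) j) := by
  cases h : orderOf g with
  | zero => simp
  | succ n =>
    have hn : g ^ (n + 1) = 1 := h ▸ pow_orderOf_eq_one g
    rw [sum_range_succ, sum_range_succ' (fun b => f ((g ^ b) j)), hn, pow_zero]

theorem sum_range_orderOf_apply_sub_apply {G : Type*} [AddCommGroup G] (f : I → G) (j : I) :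
    ∑ b ∈ range (orderOf g), (f (g ((g ^ b) j)) - f ((g ^ b) j)) = 0 := by
  rw [sum_sub_distrib, sub_eq_zero, ← sum_range_orderOf_pow_succ_apply]
  simp only [pow_succ', Perm.mul_apply]

theorem sum_range_orderOf_apply_lt_zero [Fintype I] (f : I → ℤ)
    (hf : ∀ j, ∑ i ∈ univ.filter (g.SameCycle j), f i < 0) (j : I) :
    ∑ b ∈ range (orderOf g), f ((g ^ b) j) < 0 := by
  set P : I → ℤ := fun i => ∑ b ∈ range (orderOf g), f ((g ^ b) i)
  set O := univ.filter (g.SameCycle j)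
  have hP_pow : ∀ b, P ((g ^ b) j) = P j := by
    intro b
    induction b with
    | zero => rfl
    | succ b ih =>
      rw [← ih, pow_succ', Perm.mul_apply]
      simpa only [P, pow_succ, Perm.mul_apply] using sum_range_orderOf_pow_succ_apply g f _
  have hP_orbit : ∀ i ∈ O, P i = P j := by
    intro i hi
    obtain ⟨b, -, rfl⟩ := (mem_filter.mp hi).2.exists_pow_eq'
    exact hP_pow b
  have hf_orbit : ∀ b, ∑ i ∈ O, f ((g ^ b) i) = ∑ i ∈ O, f i := fun b =>
    sum_equiv (g ^ b) (fun i => by simp [O, sameCycle_pow_right]) (fun _ _ => rfl)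
  have hsum : (#O : ℤ) * P j = orderOf g * ∑ i ∈ O, f i := by
    calc (#O : ℤ) * P j = ∑ i ∈ O, P i := by rw [sum_congr rfl hP_orbit, sum_const, nsmul_eq_mul]
      _ = ∑ b ∈ range (orderOf g), ∑ i ∈ O, f ((g ^ b) i) := sum_comm
      _ = orderOf g * ∑ i ∈ O, f i := by simp only [hf_orbit, sum_const, card_range, nsmul_eq_mul]
  refine neg_of_mul_neg_right ?_ (Nat.cast_nonneg #O)
  rw [hsum]
  exact mul_neg_of_pos_of_neg (by exact_mod_cast orderOf_pos g) (hf j)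

end Equiv.Perm

namespace CentralLeaf

open Equiv

section PartialSum

variable {I : Type*} (g : Perm I) (m : I → ℤ)

def partialSum (j : I) (r : ℕ) : ℤ := ∑ a ∈ Icc 1 r, m ((g ^ a) j)

theorem partialSum_eq_sum_range (j : I) (r : ℕ) :
    partialSum g m j r = ∑ a ∈ range r, m ((g ^ (a + 1)) j) := by
  rw [partialSum, range_eq_Ico, sum_Ico_add' (fun a => m ((g ^ a) j)), zero_add,
    Ico_add_one_right_eq_Icc]

@[simp]
theorem partialSum_zero (j : I) : partialSum g m j 0 = 0 := by
  simp [partialSum]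

theorem partialSum_add (j : I) (a b : ℕ) :
    partialSum g m j (a + b) = partialSum g m j a + partialSum g m ((g ^ a) j) b := by
  simp only [partialSum_eq_sum_range, sum_range_add, ← Perm.mul_apply, ← pow_add]
  ring_nf

theorem partialSum_one (j : I) : partialSum g m j 1 = m (g j) := by
  simp [partialSum]

theorem partialSum_succ (j : I) (r : ℕ) :
    partialSum g m j (r + 1) = m (g j) + partialSum g m (g j) r := by
  rw [add_comm, partialSum_add, partialSum_one, pow_one]

theorem partialSum_le (hm : ∀ i, m i ≤ 1) (j : I) (r : ℕ) : partialSum g m j r ≤ r := by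
  calc partialSum g m j r ≤ ∑ _a ∈ Icc 1 r, (1 : ℤ) := sum_le_sum fun a _ => hm ((g ^ a) j)
    _ = r := by simp

theorem partialSum_orderOf_lt_zero [Fintype I]
    (horb : ∀ j, ∑ i ∈ univ.filter (g.SameCycle j), m i < 0) (j : I) :
    partialSum g m j (orderOf g) < 0 := by
  rw [partialSum_eq_sum_range, Perm.sum_range_orderOf_pow_succ_apply]
  exact g.sum_range_orderOf_apply_lt_zero m horb j

theorem partialSum_le_orderOf (hm : ∀ i, m i ≤ 1)
    (hneg : ∀ j, partialSum g m j (orderOf g) < 0) (j : I) (r : ℕ) :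
    partialSum g m j r ≤ orderOf g := by
  have hpos : 0 < orderOf g := Nat.pos_of_ne_zero fun h => by simpa [h] using hneg j
  induction r using Nat.strong_induction_on with
  | _ r ih =>
    rcases lt_or_ge r (orderOf g) with hr | hr
    · exact (partialSum_le g m hm j r).trans (by exact_mod_cast hr.le)
    · obtain ⟨s, rfl⟩ := Nat.exists_eq_add_of_le hr
      rw [partialSum_add, pow_orderOf_eq_one, Perm.one_apply]
      have := hneg j
      have := ih s (by omega)
      omega

theorem exists_potential (hm : ∀ i, m i ≤ 1) (hneg : ∀ j, partialSum g m j (orderOf g) < 0) :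
    ∃ w : I → ℕ, (∀ j, m (g j) + w (g j) ≤ w j) ∧
      ∀ j, (∀ r, 1 ≤ r → partialSum g m j r ≤ 0) → w j = 0 := by
  have hbdd : ∀ j, BddAbove (Set.range (partialSum g m j)) := fun j =>
    ⟨orderOf g, Set.forall_mem_range.mpr (partialSum_le_orderOf g m hm hneg j)⟩
  have hnonneg : ∀ j, 0 ≤ ⨆ r, partialSum g m j r := fun j =>
    (partialSum_zero g m j).symm.le.trans (le_ciSup (hbdd j) 0)
  refine ⟨fun j => (⨆ r, partialSum g m j r).toNat, fun j => ?_, fun j hj => ?_⟩ <;> dsimp only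
  · have : m (g j) + ⨆ r, partialSum g m (g j) r ≤ ⨆ r, partialSum g m j r := by
      rw [← le_sub_iff_add_le']
      refine ciSup_le fun r => le_sub_iff_add_le'.mpr ?_
      rw [← partialSum_succ]
      exact le_ciSup (hbdd j) (r + 1)
    have := hnonneg (g j)
    omega
  · have : ⨆ r, partialSum g m j r ≤ 0 := ciSup_le fun r => by
      rcases r with _ | r
      · simp
      · exact hj (r + 1) r.succ_pos
    omega

end PartialSum

section Contraction

variable {R : Type*} [CommRing R] {π : R} {ι : Type*}

theorem smodEq_iff_dvd (a b : R) (n : ℕ) :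
    a ≡ b [SMOD (Ideal.span {π} ^ n • ⊤ : Submodule R R)] ↔ π ^ n ∣ a - b := by
  simp [SModEq.sub_mem, Ideal.span_singleton_pow, Ideal.mem_span_singleton]

theorem eq_of_forall_pow_dvd_sub [IsHausdorff (Ideal.span {π}) R] {a b : R}
    (h : ∀ n, π ^ n ∣ a - b) : a = b :=
  IsHausdorff.eq_iff_smodEq.mpr fun n => (smodEq_iff_dvd a b n).mpr (h n)

theorem exists_limit [IsPrecomplete (Ideal.span {π}) R] (f : ℕ → R)
    (hf : ∀ n, π ^ n ∣ f (n + 1) - f n) : ∃ L, ∀ n, π ^ n ∣ L - f n := by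
  have hcauchy : ∀ {m n}, m ≤ n → π ^ m ∣ f n - f m := by
    intro m n hmn
    induction n, hmn using Nat.le_induction with
    | base => simp
    | succ n hmn ih =>
      simpa using dvd_add ((pow_dvd_pow π hmn).trans (hf n)) ih
  obtain ⟨L, hL⟩ := IsPrecomplete.prec inferInstance (I := Ideal.span {π})
    fun hmn => (smodEq_iff_dvd _ _ _).mpr (dvd_sub_comm.mp (hcauchy hmn))
  exact ⟨L, fun n => dvd_sub_comm.mp ((smodEq_iff_dvd _ _ _).mp (hL n))⟩

def IsContraction (π : R) (Ψ : (ι → R) → (ι → R)) : Prop :=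
  ∀ n y y', (∀ i, π ^ n ∣ y i - y' i) → ∀ i, π ^ (n + 1) ∣ Ψ y i - Ψ y' i

namespace IsContraction

variable {Ψ : (ι → R) → (ι → R)}

theorem eq_of_isFixedPt [IsHausdorff (Ideal.span {π}) R] (hΨ : IsContraction π Ψ) {y y' : ι → R}
    (hy : Function.IsFixedPt Ψ y) (hy' : Function.IsFixedPt Ψ y') : y = y' := by
  have h : ∀ n i, π ^ n ∣ y i - y' i := by
    intro n
    induction n with
    | zero => simp
    | succ n ih => simpa only [hy.eq, hy'.eq] using hΨ n y y' ih
  exact funext fun i => eq_of_forall_pow_dvd_sub fun n => h n i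

theorem exists_isFixedPt [IsAdicComplete (Ideal.span {π}) R] (hΨ : IsContraction π Ψ) :
    ∃ y, Function.IsFixedPt Ψ y := by
  set Y : ℕ → ι → R := fun n => Ψ^[n] 0
  have hY : ∀ n i, π ^ n ∣ Y (n + 1) i - Y n i := by
    intro n
    induction n with
    | zero => simp
    | succ n ih =>
      simpa only [Y, Function.iterate_succ_apply'] using hΨ n _ _ ih
  choose y hy using fun i => exists_limit (fun n => Y n i) (fun n => hY n i)
  refine ⟨y, funext fun i => eq_of_forall_pow_dvd_sub (π := π) fun n => ?_⟩
  have h₁ : π ^ (n + 1) ∣ Ψ y i - Y (n + 1) i := by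
    simpa only [Y, Function.iterate_succ_apply'] using hΨ n y (Y n) (fun i => hy i n) i
  have h₂ := (pow_dvd_pow π n.le_succ).trans (h₁.sub (hy i (n + 1)))
  rwa [sub_sub_sub_cancel_right] at h₂

end IsContraction

theorem exists_isFixedPt_of_isContraction_iterate [IsAdicComplete (Ideal.span {π}) R]
    {Φ : (ι → R) → (ι → R)} {n : ℕ} (hΦ : IsContraction π Φ^[n]) :
    ∃ y, Function.IsFixedPt Φ y := by
  obtain ⟨y, hy⟩ := hΦ.exists_isFixedPt
  refine ⟨y, hΦ.eq_of_isFixedPt ?_ hy⟩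
  rw [Function.IsFixedPt, ← Function.iterate_succ_apply, Function.iterate_succ_apply', hy.eq]

theorem pow_dvd_iterate_sub (h : Perm ι) (a : ι → ℕ) {Φ : (ι → R) → ι → R}
    (hΦ : ∀ c y y' i, π ^ c ∣ y (h i) - y' (h i) → π ^ (a i + c) ∣ Φ y i - Φ y' i)
    (q c : ℕ) {y y' : ι → R} (hc : ∀ i, π ^ c ∣ y i - y' i) (i : ι) :
    π ^ (c + ∑ b ∈ range q, a ((h ^ b) i)) ∣ Φ^[q] y i - Φ^[q] y' i := by
  induction q generalizing i with
  | zero => simpa using hc i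
  | succ q ih =>
    have := hΦ _ _ _ i (ih (h i))
    simp only [Function.iterate_succ_apply', sum_range_succ', pow_succ, Perm.mul_apply,
      pow_zero, Perm.one_apply]
    convert this using 2
    ring

theorem isContraction_iterate (h : Perm ι) (a : ι → ℕ) {Φ : (ι → R) → ι → R}
    (hΦ : ∀ c y y' i, π ^ c ∣ y (h i) - y' (h i) → π ^ (a i + c) ∣ Φ y i - Φ y' i) {n : ℕ}
    (ha : ∀ i, 1 ≤ ∑ b ∈ range n, a ((h ^ b) i)) : IsContraction π Φ^[n] :=
  fun c _ _ hc i =>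
    (pow_dvd_pow π (by have := ha i; omega)).trans (pow_dvd_iterate_sub h a hΦ n c hc i)

end Contraction

section Solution

variable {R : Type*} [CommRing R] (π : R) (σ : R ≃+* R) {I : Type*} (δ : Perm I) (m : I → ℤ)
  (ε : I → Rˣ) (τ : I → R)

def IsSolution (x : I → R) : Prop :=
  ∀ j, π * τ j = -π * x j + π ^ (1 + m (δ⁻¹ j)).toNat * ε j * σ (x (δ⁻¹ j))

def twistedShift (a : I → ℕ) (y : I → R) (i : I) : R :=
  σ.symm (↑(ε (δ i))⁻¹ * (π ^ a i * (τ (δ i) + y (δ i))))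

variable {π σ δ m ε τ}

namespace IsSolution

variable {x : I → R}

theorem pow_dvd_add [IsDomain R] (hπ : π ≠ 0) (hσ : σ π = π) (hx : IsSolution π σ δ m ε τ x)
    {j : I} {c e : ℕ} (hc : π ^ c ∣ x (δ⁻¹ j)) (he : e + 1 ≤ (1 + m (δ⁻¹ j)).toNat + c) :
    π ^ e ∣ τ j + x j := by
  have hσc : π ^ c ∣ σ (x (δ⁻¹ j)) := by simpa only [map_pow, hσ] using map_dvd σ hc
  have h : π * (τ j + x j) = π ^ (1 + m (δ⁻¹ j)).toNat * ε j * σ (x (δ⁻¹ j)) := by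
    linear_combination hx j
  have : π * π ^ e ∣ π * (τ j + x j) := by
    rw [h, ← pow_succ']
    exact (pow_dvd_pow π he).trans (by rw [pow_add]; exact mul_dvd_mul (dvd_mul_right _ _) hσc)
  exact (mul_dvd_mul_iff_left hπ).mp this

theorem dvd_of_eq_neg_one (hσ : σ π = π) (hx : IsSolution π σ δ m ε τ x) {j : I}
    (hj : m j = -1) : π ∣ x j := by
  have h := hx (δ j)
  rw [Perm.coe_inv, symm_apply_apply, hj, add_neg_cancel, Int.toNat_zero, pow_zero, one_mul] at h
  have : π ∣ ε (δ j) * σ (x j) := ⟨τ (δ j) + x (δ j), by linear_combination -h⟩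
  rwa [Units.dvd_mul_left, ← hσ, map_dvd_iff] at this

theorem pow_dvd_add_of_minimal [IsDomain R] (hπ : π ≠ 0) (hσ : σ π = π)
    (hx : IsSolution π σ δ m ε τ x) (hm : ∀ i, -1 ≤ m i) {j : I} {r : ℕ} (hj : τ j ≠ 0)
    (hr : 0 < partialSum δ⁻¹ m j r)
    (hmin : ∀ r' < r, ∀ j', τ j' ≠ 0 → partialSum δ⁻¹ m j' r' ≤ 0) {a : ℕ} (ha : a ≤ r) :
    π ^ (1 - partialSum δ⁻¹ m j a).toNat ∣ τ ((δ⁻¹ ^ a) j) + x ((δ⁻¹ ^ a) j) := by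
  induction ha using Nat.decreasingInduction with
  | self => simp [show (1 - partialSum δ⁻¹ m j r).toNat = 0 by omega]
  | of_succ a ha ih =>
    set i := (δ⁻¹ ^ a) j
    have hsucc : (δ⁻¹ ^ (a + 1)) j = δ⁻¹ i := by rw [pow_succ', Perm.mul_apply]
    have hstep : partialSum δ⁻¹ m j (a + 1) = partialSum δ⁻¹ m j a + m (δ⁻¹ i) := by
      rw [partialSum_add, partialSum_one]
    have hnext : π ^ (1 - partialSum δ⁻¹ m j (a + 1)).toNat ∣ x (δ⁻¹ i) := by
      rcases le_or_gt 1 (partialSum δ⁻¹ m j (a + 1)) with h | h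
      · simp [show (1 - partialSum δ⁻¹ m j (a + 1)).toNat = 0 by omega]
      · have hτ : τ (δ⁻¹ i) = 0 := by
          by_contra hτ
          have := hmin (r - (a + 1)) (by omega) _ hτ
          have := partialSum_add δ⁻¹ m j (a + 1) (r - (a + 1))
          rw [Nat.add_sub_cancel' ha, hsucc] at this
          omega
        rwa [hsucc, hτ, zero_add] at ih
    have := hmin a ha j hj
    have := hm (δ⁻¹ i)
    exact hx.pow_dvd_add hπ hσ hnext (by omega)

theorem partialSum_le_zero [IsDomain R] (hπ : π ≠ 0) (hπ' : ¬IsUnit π) (hσ : σ π = π)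
    (hx : IsSolution π σ δ m ε τ x) (hm : ∀ i, -1 ≤ m i)
    (hτ : ∀ j, τ j ≠ 0 → IsUnit (τ j) ∧ m j = -1) (j : I) (hj : τ j ≠ 0) (r : ℕ) :
    partialSum δ⁻¹ m j r ≤ 0 := by
  by_contra! hr
  have hex : ∃ r j, τ j ≠ 0 ∧ 0 < partialSum δ⁻¹ m j r := ⟨r, j, hj, hr⟩
  obtain ⟨j, hj, hr⟩ := Nat.find_spec hex
  have hmin : ∀ r' < Nat.find hex, ∀ j', τ j' ≠ 0 → partialSum δ⁻¹ m j' r' ≤ 0 :=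
    fun r' hr' j' hj' => not_lt.mp fun h => Nat.find_min hex hr' ⟨j', hj', h⟩
  have h₁ : π ∣ τ j + x j := by
    simpa using hx.pow_dvd_add_of_minimal hπ hσ hm hj hr hmin (Nat.zero_le _)
  have h₂ : π ∣ τ j := by
    simpa using h₁.sub (hx.dvd_of_eq_neg_one hσ (hτ j hj).2)
  exact hπ' (isUnit_of_dvd_unit h₂ (hτ j hj).1)

end IsSolution

theorem pow_dvd_twistedShift_sub (hσ : σ π = π) (a : I → ℕ) (c : ℕ) (y y' : I → R) (i : I)
    (h : π ^ c ∣ y (δ i) - y' (δ i)) :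
    π ^ (a i + c) ∣ twistedShift π σ δ ε τ a y i - twistedShift π σ δ ε τ a y' i := by
  have hσ' : σ.symm π = π := σ.symm_apply_eq.mpr hσ.symm
  have hdiff : twistedShift π σ δ ε τ a y i - twistedShift π σ δ ε τ a y' i =
      σ.symm (↑(ε (δ i))⁻¹ * π ^ a i * (y (δ i) - y' (δ i))) := by
    simp only [twistedShift, ← map_sub]
    ring_nf
  have h' : π ^ c ∣ σ.symm (y (δ i) - y' (δ i)) := by
    simpa only [map_pow, hσ'] using map_dvd σ.symm h
  rw [hdiff, pow_add, map_mul, map_mul, map_pow, hσ']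
  exact mul_dvd_mul (dvd_mul_left _ _) h'

theorem isSolution_pow_mul (hσ : σ π = π) (w a : I → ℕ) (hτ : ∀ j, τ j ≠ 0 → w j = 0)
    (ha : ∀ i, (1 + m i).toNat + w i + a i = 1 + w (δ i)) (y : I → R)
    (hy : ∀ i, ε (δ i) * σ (y i) = π ^ a i * (τ (δ i) + y (δ i))) :
    IsSolution π σ δ m ε τ fun j => π ^ w j * y j := by
  intro j
  obtain ⟨i, rfl⟩ := δ.surjective j
  simp only [Perm.coe_inv, symm_apply_apply, map_mul, map_pow, hσ]
  have hpow : π ^ (1 + m i).toNat * π ^ w i * π ^ a i = π * π ^ w (δ i) := by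
    rw [← pow_add, ← pow_add, ha, pow_add, pow_one]
  have hτw : π * π ^ w (δ i) * τ (δ i) = π * τ (δ i) := by
    by_cases h : τ (δ i) = 0
    · simp [h]
    · simp [hτ _ h]
  linear_combination -(π ^ (1 + m i).toNat * π ^ w i) * hy i - (τ (δ i) + y (δ i)) * hpow - hτw

theorem exists_isSolution [IsAdicComplete (Ideal.span {π}) R] (hσ : σ π = π)
    (hm : ∀ i, -1 ≤ m i) (hneg : ∀ i, ∑ b ∈ range (orderOf δ), m ((δ ^ b) i) < 0) (w : I → ℕ)
    (hw : ∀ j, m (δ⁻¹ j) + w (δ⁻¹ j) ≤ w j) (hτ : ∀ j, τ j ≠ 0 → w j = 0) :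
    ∃ x, IsSolution π σ δ m ε τ x := by
  set a : I → ℕ := fun i => ((w (δ i) : ℤ) - m i - w i).toNat
  have ha : ∀ i, (a i : ℤ) = w (δ i) - m i - w i := fun i => Int.toNat_of_nonneg <| by
    have := hw (δ i)
    simp only [Perm.coe_inv, symm_apply_apply] at this
    omega
  have hsum : ∀ i, 1 ≤ ∑ b ∈ range (orderOf δ), a ((δ ^ b) i) := by
    intro i
    have : ((∑ b ∈ range (orderOf δ), a ((δ ^ b) i) : ℕ) : ℤ) =
        ∑ b ∈ range (orderOf δ), ((w (δ ((δ ^ b) i)) : ℤ) - w ((δ ^ b) i)) -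
          ∑ b ∈ range (orderOf δ), m ((δ ^ b) i) := by
      rw [Nat.cast_sum, ← sum_sub_distrib]
      exact sum_congr rfl fun b _ => by rw [ha]; ring
    have htel := δ.sum_range_orderOf_apply_sub_apply (fun i => (w i : ℤ)) i
    rw [htel, zero_sub] at this
    have := hneg i
    omega
  obtain ⟨y, hy⟩ := exists_isFixedPt_of_isContraction_iterate <|
    isContraction_iterate δ a (pow_dvd_twistedShift_sub (ε := ε) (τ := τ) hσ a) hsum
  refine ⟨_, isSolution_pow_mul hσ w a hτ (fun i => by have := ha i; have := hm i; omega) y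
    fun i => ?_⟩
  conv_lhs => rw [← congrFun hy i]
  simp [twistedShift]

theorem exists_isSolution_iff [IsDomain R] [IsAdicComplete (Ideal.span {π}) R] [Fintype I]
    (hπ : π ≠ 0) (hπ' : ¬IsUnit π) (hσ : σ π = π) (hm₁ : ∀ i, -1 ≤ m i) (hm₂ : ∀ i, m i ≤ 1)
    (horb : ∀ j, ∑ i ∈ univ.filter (δ.SameCycle j), m i < 0)
    (hτ : ∀ j, τ j ≠ 0 → IsUnit (τ j) ∧ m j = -1) :
    (∃ x, IsSolution π σ δ m ε τ x) ↔ ∀ j, τ j ≠ 0 → ∀ r, 1 ≤ r → partialSum δ⁻¹ m j r ≤ 0 := by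
  constructor
  · rintro ⟨x, hx⟩ j hj r _
    exact hx.partialSum_le_zero hπ hπ' hσ hm₁ hτ j hj r
  · intro hC
    -- `convert` also reconciles the decidability instances of `δ⁻¹.SameCycle` and `δ.SameCycle`.
    obtain ⟨w, hw, hw₀⟩ := exists_potential δ⁻¹ m hm₂ <| partialSum_orderOf_lt_zero δ⁻¹ m
      fun j => by convert horb j using 3; exact Perm.sameCycle_inv
    have hneg := δ.sum_range_orderOf_apply_lt_zero m horb
    exact exists_isSolution hσ hm₁ hneg w hw fun j hj => hw₀ j (hC j hj)

end Solution

end CentralLeaf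

/-- Let `p` be a prime, `k` algebraically closed of characteristic `p`,
`I` a finite set, `δ` a permutation of `I`, `m : I → ℤ` with values in `{-1,0,1}` and
negative sum on every `δ`-orbit, `ε` a family of Witt-vector units and `t : I → k`
with `t j = 0` whenever `m j ≠ -1`; write `τ_j` for the Teichmüller lift of `t j`.
Set `C = {j | m j = -1 ∧ ∀ r ≥ 1, ∑_{a=1}^r m (δ^{-a} j) ≤ 0}`. Then the system
`p τ_j = -p x_j + p^{1 + m(δ⁻¹ j)} ε_j σ(x_{δ⁻¹ j})` (for all `j`) has a solution
`x : I → W(k)` if and only if `t j = 0` for all `j ∉ C`. -/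
theorem stmt_5 (p : ℕ) [Fact p.Prime] (k : Type*) [Field k] [IsAlgClosed k] [CharP k p]
    (I : Type*) [Fintype I] (δ : Equiv.Perm I)
    (m : I → ℤ) (hm : ∀ j, m j = -1 ∨ m j = 0 ∨ m j = 1)
    (horb : ∀ j : I, ∑ i ∈ Finset.univ.filter (fun i => δ.SameCycle j i), m i < 0)
    (ε : I → (WittVector p k)ˣ) (t : I → k)
    (ht : ∀ j, m j ≠ -1 → t j = 0) :
    (∃ x : I → WittVector p k, ∀ j : I,
        (p : WittVector p k) * WittVector.teichmuller p (t j)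
          = -(p : WittVector p k) * x j
            + (p : WittVector p k) ^ (1 + m (δ⁻¹ j)).toNat * (ε j : WittVector p k)
              * WittVector.frobenius (x (δ⁻¹ j)))
      ↔ ∀ j : I, j ∉ {j : I | m j = -1 ∧ ∀ r : ℕ, 1 ≤ r →
            ∑ a ∈ Finset.Icc 1 r, m ((δ⁻¹ ^ a) j) ≤ 0} → t j = 0 := by
  have hp := WittVector.irreducible p (k := k)
  have hteich : ∀ c : k, WittVector.teichmuller p c = 0 ↔ c = 0 := fun c =>
    ⟨fun h => by simpa [h] using (WittVector.teichmuller_coeff_zero p c).symm,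
      fun h => h ▸ WittVector.teichmuller_zero p⟩
  have hτ : ∀ j, WittVector.teichmuller p (t j) ≠ 0 →
      IsUnit (WittVector.teichmuller p (t j)) ∧ m j = -1 := fun j hj =>
    have htj : t j ≠ 0 := (hteich (t j)).not.mp hj
    ⟨(Ne.isUnit htj).map _, not_imp_comm.mp (ht j) htj⟩
  have hm₁ : ∀ j, -1 ≤ m j := fun j => by have := hm j; omega
  have hm₂ : ∀ j, m j ≤ 1 := fun j => by have := hm j; omega
  refine (CentralLeaf.exists_isSolution_iff (σ := WittVector.frobeniusEquiv p k) (ε := ε)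
    hp.ne_zero hp.not_isUnit (map_natCast _ p) hm₁ hm₂ horb hτ).trans
    (forall_congr' fun j => ?_)
  have := ht j
  simp only [Set.mem_ofPred_eq, CentralLeaf.partialSum, ne_eq, hteich]
  tauto
end
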